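/- Let S be a monoid such that the class of strongly flat left S-acts is closed under ultraproducts (for every set I, every family (B_i)_{i∈I} of strongly flat left S-acts and every ultrafilter Φ on I, the ultraproduct (∏_{i∈I} B_i)/Φ is strongly flat), and suppose S satisfies Condition (A). Then every strongly flat left S-act is a coproduct of cyclic S-acts: for every strongly flat left S-act M and every x ∈ M there exists c ∈ M such that the connected component of x equals S·c, i.e. {y ∈ M | y ∼ x} = {s·c | s ∈ S}. -/
import Mathlib


universe u

/-- Condition (P) for a left `S`-act `B`. -/
def CondP (S : Type u) [Monoid S] (B : Type u) [MulAction S B] : Prop :=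
  ∀ (s t : S) (x y : B), s • x = t • y →
    ∃ (z : B) (s' t' : S), x = s' • z ∧ y = t' • z ∧ s * s' = t * t'

/-- Condition (E) for a left `S`-act `B`. -/
def CondE (S : Type u) [Monoid S] (B : Type u) [MulAction S B] : Prop :=
  ∀ (s t : S) (x : B), s • x = t • x →
    ∃ (z : B) (s' : S), x = s' • z ∧ s * s' = t * s'

/-- A left `S`-act is strongly flat if it satisfies conditions (P) and (E). -/
def StronglyFlat (S : Type u) [Monoid S] (B : Type u) [MulAction S B] : Prop :=
  CondP S B ∧ CondE S B

/-- The equivalence `f ≡ g` iff `{i | f i = g i} ∈ Φ` on `∀ i, B i`. -/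
def ultraSetoid {I : Type u} (Φ : Ultrafilter I) (B : I → Type u) :
    Setoid (∀ i, B i) where
  r f g := {i | f i = g i} ∈ (Φ : Filter I)
  iseqv := by
    constructor
    · intro f
      have h : {i | f i = f i} = Set.univ := by ext i; simp
      rw [h]; exact Filter.univ_mem
    · intro f g h
      exact Filter.mem_of_superset h fun i hi => Eq.symm hi
    · intro f g k h1 h2
      exact Filter.mem_of_superset (Filter.inter_mem h1 h2) fun i hi => hi.1.trans hi.2

/-- The ultraproduct `(∏ᵢ B i)/Φ`. -/
def Ultraproduct {I : Type u} (Φ : Ultrafilter I) (B : I → Type u) : Type u :=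
  Quotient (ultraSetoid Φ B)

instance Ultraproduct.instMulAction {S : Type u} [Monoid S] {I : Type u}
    (Φ : Ultrafilter I) (B : I → Type u) [∀ i, MulAction S (B i)] :
    MulAction S (Ultraproduct Φ B) where
  smul s := Quotient.map (fun f i => s • f i)
    (fun f g h => Filter.mem_of_superset h fun i hi => congrArg (fun y => s • y) hi)
  one_smul x := Quotient.inductionOn x fun f =>
    Quotient.sound (Filter.univ_mem' fun i => one_smul S (f i))
  mul_smul s t x := Quotient.inductionOn x fun f =>
    Quotient.sound (Filter.univ_mem' fun i => mul_smul s t (f i))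

/-- The connectedness relation on a left `S`-act: the equivalence relation
generated by the pairs `(a, s • a)`. -/
def Connected (S : Type u) [Monoid S] {M : Type u} [MulAction S M] (x y : M) : Prop :=
  Relation.EqvGen (fun a b : M => ∃ s : S, b = s • a) x y

/-- if the class of strongly flat left `S`-acts is closed under
ultraproducts and `S` satisfies Condition (A), then every strongly flat left
`S`-act is a coproduct of cyclic acts: every connected component is of the
form `S • c`. -/
theorem stmt_13 {S : Type u} [Monoid S]
    (hclosed : ∀ (I : Type u) (Φ : Ultrafilter I) (B : I → Type u)
      [∀ i, MulAction S (B i)],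
      (∀ i, StronglyFlat S (B i)) → StronglyFlat S (Ultraproduct Φ B))
    (hA : ∀ (A : Type u) [MulAction S A] (a : ℕ → A),
      (∀ n : ℕ, Set.range (fun s : S => s • a n) ⊆ Set.range (fun s : S => s • a (n + 1))) →
      ∃ N : ℕ, ∀ n ≥ N, Set.range (fun s : S => s • a n) = Set.range (fun s : S => s • a N))
    (M : Type u) [MulAction S M] (hM : StronglyFlat S M) (x : M) :
    ∃ c : M, {y : M | Connected S x y} = Set.range (fun s : S => s • c) := by
  classical
  have hsub : ∀ a b : M, a ∈ Set.range (fun s : S => s • b) →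
      Set.range (fun s : S => s • a) ⊆ Set.range (fun s : S => s • b) := by
    rintro a b ⟨u, hu⟩ y ⟨s, hs⟩
    have hu' : u • b = a := hu
    have hs' : s • a = y := hs
    refine ⟨s * u, ?_⟩
    show (s * u) • b = y
    rw [mul_smul, hu', hs']
  have dir : ∀ y z : M, Connected S y z →
      ∃ w : M, y ∈ Set.range (fun s : S => s • w) ∧ z ∈ Set.range (fun s : S => s • w) := by
    intro y z h
    induction h with
    | rel a b hab => obtain ⟨s, rfl⟩ := hab; exact ⟨a, ⟨1, one_smul S a⟩, ⟨s, rfl⟩⟩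
    | refl a => exact ⟨a, ⟨1, one_smul S a⟩, ⟨1, one_smul S a⟩⟩
    | symm a b _ ih => obtain ⟨w, h1, h2⟩ := ih; exact ⟨w, h2, h1⟩
    | trans a b c _ _ ih1 ih2 =>
      obtain ⟨w1, ha, ⟨s, hb1⟩⟩ := ih1
      obtain ⟨w2, ⟨t, hb2⟩, hc⟩ := ih2
      have hb1' : s • w1 = b := hb1
      have hb2' : t • w2 = b := hb2
      obtain ⟨v, s', t', hw1, hw2, -⟩ := hM.1 s t w1 w2 (hb1'.trans hb2'.symm)
      exact ⟨v, hsub _ _ ⟨s', hw1.symm⟩ ha, hsub _ _ ⟨t', hw2.symm⟩ hc⟩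
  set C := {y : M | Connected S x y} with hC
  by_cases hmax : ∃ c : C, ∀ b : C,
      Set.range (fun s : S => s • (c : M)) ⊆ Set.range (fun s : S => s • (b : M)) →
      Set.range (fun s : S => s • (b : M)) ⊆ Set.range (fun s : S => s • (c : M))
  · obtain ⟨c, hc⟩ := hmax
    refine ⟨(c : M), Set.Subset.antisymm ?_ ?_⟩
    · intro y hy
      have hcy : Connected S (c : M) y :=
        Relation.EqvGen.trans _ x _ (Relation.EqvGen.symm _ _ c.2) hy
      obtain ⟨w, hcw, hyw⟩ := dir _ _ hcy
      have hwC : w ∈ C := by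
        obtain ⟨s, hs⟩ := hcw
        exact Relation.EqvGen.trans _ (c : M) _ c.2
          (Relation.EqvGen.symm _ _ (Relation.EqvGen.rel w (c : M) ⟨s, hs.symm⟩))
      exact hc ⟨w, hwC⟩ (hsub _ _ hcw) hyw
    · rintro _ ⟨s, rfl⟩
      exact Relation.EqvGen.trans _ (c : M) _ c.2 (Relation.EqvGen.rel _ _ ⟨s, rfl⟩)
  · exfalso
    push_neg at hmax
    choose F hF1 hF2 using hmax
    set a : ℕ → C := fun n => F^[n] ⟨x, Relation.EqvGen.refl x⟩ with ha
    have hstep : ∀ n, a (n + 1) = F (a n) := fun n =>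
      Function.iterate_succ_apply' F n _
    have hmono : ∀ n : ℕ, Set.range (fun s : S => s • ((a n : M))) ⊆
        Set.range (fun s : S => s • ((a (n + 1) : M))) := by
      intro n
      rw [hstep n]
      exact hF1 (a n)
    obtain ⟨N, hN⟩ := hA M (fun n => (a n : M)) hmono
    have h1 := hN (N + 1) (Nat.le_succ N)
    have h2 := hF2 (a N)
    rw [← hstep N] at h2
    exact h2 h1.le
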